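/- Let δ ∈ ℝ∪{∞}. The function d_δ is an ultrametric distance on 𝒱(•,δ): it is symmetric, d_δ(V_E,V_F) = 0 if and only if V_E = V_F, and d_δ(V_E,V_F) ≤ max{d_δ(V_E,V_G), d_δ(V_G,V_F)} for all V_E, V_F, V_G ∈ 𝒱(•,δ). -/

import Mathlib

open Filter Topology TopologicalSpace Set Polynomial

noncomputable section

namespace PaperPCZar

variable {K : Type*} [Field K]

/-- `expNeg γ = e^{-γ}` for `γ ∈ ℝ ∪ {∞}`, with `e^{-∞} = 0`. -/
def expNeg (γ : WithTop ℝ) : ℝ := WithTop.recTopCoe 0 (fun r => Real.exp (-r)) γ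

/-- `v` is a rank-one (i.e. nontrivial, real-valued) valuation. -/
def IsRankOne (v : AddValuation K (WithTop ℝ)) : Prop := ∃ x : K, v x ≠ 0 ∧ v x ≠ ⊤

/-- The value group `Γ_v` of `v`, as a subset of `ℝ`. -/
def valueGroup (v : AddValuation K (WithTop ℝ)) : Set ℝ := {r : ℝ | ∃ x : K, v x = (r : WithTop ℝ)}

/-- `ℚΓ_v = {q·γ : q ∈ ℚ, γ ∈ Γ_v}`, the divisible hull of the value group inside `ℝ`. -/
def QGamma (v : AddValuation K (WithTop ℝ)) : Set ℝ :=
  {r : ℝ | ∃ (q : ℚ) (γ : ℝ), γ ∈ valueGroup v ∧ r = q * γ}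

/-- Order convergence of a sequence in `ℝ ∪ {∞}` to `γ`. -/
def OrdLim (f : ℕ → WithTop ℝ) (γ : WithTop ℝ) : Prop :=
  (∀ a : WithTop ℝ, a < γ → ∀ᶠ n in atTop, a < f n) ∧
  (∀ b : WithTop ℝ, γ < b → ∀ᶠ n in atTop, f n < b)

/-- `s` is a pseudo-convergent sequence with respect to `v`. -/
def IsPC (v : AddValuation K (WithTop ℝ)) (s : ℕ → K) : Prop :=
  ∀ n, v (s (n + 1) - s n) < v (s (n + 2) - s (n + 1))

/-- `s` is a pseudo-divergent sequence with respect to `v`. -/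
def IsPD (v : AddValuation K (WithTop ℝ)) (s : ℕ → K) : Prop :=
  ∀ n, v (s (n + 1) - s (n + 2)) < v (s n - s (n + 1))

/-- `s` is a pseudo-stationary sequence with respect to `v`. -/
def IsPS (v : AddValuation K (WithTop ℝ)) (s : ℕ → K) : Prop :=
  ∀ n m n' m' : ℕ, n ≠ m → n' ≠ m' → v (s n - s m) = v (s n' - s m')

/-- `δ ∈ ℝ ∪ {∞}` is the breadth of the sequence `s`, i.e. `δ = lim_n v(s_{n+1} - s_n)`. -/
def IsBreadth (v : AddValuation K (WithTop ℝ)) (s : ℕ → K) (δ : WithTop ℝ) : Prop :=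
  OrdLim (fun n => v (s (n + 1) - s n)) δ

/-- `α ∈ K` is a pseudo-limit of the pseudo-convergent sequence `s`. -/
def IsPCLimit (v : AddValuation K (WithTop ℝ)) (s : ℕ → K) (α : K) : Prop :=
  ∀ n, v (α - s n) < v (α - s (n + 1))

/-- `α ∈ K` is a pseudo-limit of the pseudo-divergent sequence `s`. -/
def IsPDLimit (v : AddValuation K (WithTop ℝ)) (s : ℕ → K) (α : K) : Prop :=
  ∀ n, v (α - s (n + 1)) < v (α - s n)

/-- `β ∈ K̄` is a pseudo-limit of `s ⊆ K` with respect to an extension `u` of `v`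
to the algebraic closure of `K`. -/
def IsPCLimitAC (u : AddValuation (AlgebraicClosure K) (WithTop ℝ)) (s : ℕ → K)
    (β : AlgebraicClosure K) : Prop :=
  ∀ n, u (β - algebraMap K (AlgebraicClosure K) (s n)) <
    u (β - algebraMap K (AlgebraicClosure K) (s (n + 1)))

/-- `s` is of transcendental type: for every polynomial `f`, `v(f(s_n))` eventually
stabilizes. -/
def IsTranscendentalType (v : AddValuation K (WithTop ℝ)) (s : ℕ → K) : Prop :=
  ∀ f : Polynomial K, ∃ N, ∀ n ≥ N, v (f.eval (s n)) = v (f.eval (s N))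

/-- The ultrametric distance `d(x,y) = e^{-v(x-y)}` on `K`. -/
def dK (v : AddValuation K (WithTop ℝ)) (x y : K) : ℝ := expNeg (v (x - y))

/-- The set `V_E = {φ ∈ K(X) : φ(s_n) ∈ V for all but finitely many n}`. -/
def VESet (v : AddValuation K (WithTop ℝ)) (s : ℕ → K) : Set (RatFunc K) :=
  {φ : RatFunc K | ∀ᶠ n in atTop, 0 ≤ v (RatFunc.eval (RingHom.id K) (s n) φ)}

/-- `Zar(K(X)|V)`: the valuation subrings of `K(X)` containing (the image of) `V`. -/
def ZarSet (v : AddValuation K (WithTop ℝ)) : Set (ValuationSubring (RatFunc K)) :=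
  {W | ∀ x : K, 0 ≤ v x → algebraMap K (RatFunc K) x ∈ W}

/-- `𝒱`: valuation subrings of `K(X)` of the form `V_E`, `E` pseudo-convergent. -/
def VV (v : AddValuation K (WithTop ℝ)) : Set (ValuationSubring (RatFunc K)) :=
  {W | ∃ s : ℕ → K, IsPC v s ∧ (W : Set (RatFunc K)) = VESet v s}

/-- `𝒱(•,δ)`: those `V_E` with `E` pseudo-convergent of breadth `δ`. -/
def VVδ (v : AddValuation K (WithTop ℝ)) (δ : WithTop ℝ) : Set (ValuationSubring (RatFunc K)) :=
  {W | ∃ s : ℕ → K, IsPC v s ∧ IsBreadth v s δ ∧ (W : Set (RatFunc K)) = VESet v s}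

/-- `𝒱_K(•,δ)`: those `V_E` with `E` pseudo-convergent of breadth `δ` having a
pseudo-limit in `K`. -/
def VVKδ (v : AddValuation K (WithTop ℝ)) (δ : WithTop ℝ) : Set (ValuationSubring (RatFunc K)) :=
  {W | ∃ s : ℕ → K, IsPC v s ∧ IsBreadth v s δ ∧ (∃ α : K, IsPCLimit v s α) ∧
    (W : Set (RatFunc K)) = VESet v s}

/-- `𝒱(β,•)`: those `V_E` with `E` pseudo-convergent having `β ∈ K̄` as a pseudo-limit
with respect to `u`. -/
def VVβ (v : AddValuation K (WithTop ℝ)) (u : AddValuation (AlgebraicClosure K) (WithTop ℝ))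
    (β : AlgebraicClosure K) : Set (ValuationSubring (RatFunc K)) :=
  {W | ∃ s : ℕ → K, IsPC v s ∧ IsPCLimitAC u s β ∧ (W : Set (RatFunc K)) = VESet v s}

/-- `𝒱(β,•)` for a pseudo-limit `β ∈ K`. -/
def VVβK (v : AddValuation K (WithTop ℝ)) (β : K) : Set (ValuationSubring (RatFunc K)) :=
  {W | ∃ s : ℕ → K, IsPC v s ∧ IsPCLimit v s β ∧ (W : Set (RatFunc K)) = VESet v s}

/-- `𝒱_div`: those `V_E` with `E` pseudo-divergent. -/
def VVdiv (v : AddValuation K (WithTop ℝ)) : Set (ValuationSubring (RatFunc K)) :=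
  {W | ∃ s : ℕ → K, IsPD v s ∧ (W : Set (RatFunc K)) = VESet v s}

/-- `𝒱_div(•,δ)`: those `V_E` with `E` pseudo-divergent of breadth `δ`. -/
def VVdivδ (v : AddValuation K (WithTop ℝ)) (δ : WithTop ℝ) : Set (ValuationSubring (RatFunc K)) :=
  {W | ∃ s : ℕ → K, IsPD v s ∧ IsBreadth v s δ ∧ (W : Set (RatFunc K)) = VESet v s}

/-- `𝒱_div(β,•)`: those `V_E` with `E` pseudo-divergent having `β ∈ K` as a pseudo-limit. -/
def VVdivβ (v : AddValuation K (WithTop ℝ)) (β : K) : Set (ValuationSubring (RatFunc K)) :=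
  {W | ∃ s : ℕ → K, IsPD v s ∧ IsPDLimit v s β ∧ (W : Set (RatFunc K)) = VESet v s}

/-- `𝒱_stat(•,δ)`: those `V_E` with `E` pseudo-stationary of breadth `δ`. -/
def VVstatδ (v : AddValuation K (WithTop ℝ)) (δ : WithTop ℝ) :
    Set (ValuationSubring (RatFunc K)) :=
  {W | ∃ s : ℕ → K, (∀ n m : ℕ, n ≠ m → v (s n - s m) = δ) ∧
    (W : Set (RatFunc K)) = VESet v s}

/-- `𝒱_stat(β,•)`: those `V_E` with `E` pseudo-stationary having `β` as a pseudo-limit. -/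
def VVstatβ (v : AddValuation K (WithTop ℝ)) (β : K) : Set (ValuationSubring (RatFunc K)) :=
  {W | ∃ (s : ℕ → K) (δ : WithTop ℝ), (∀ n m : ℕ, n ≠ m → v (s n - s m) = δ) ∧
    (∀ n, δ ≤ v (β - s n)) ∧ (W : Set (RatFunc K)) = VESet v s}

/-- The Zariski topology on the valuation subrings of a field `L`, generated by the
sets `B(φ) = {W : φ ∈ W}`. -/
def zarTop (L : Type*) [Field L] : TopologicalSpace (ValuationSubring L) :=
  generateFrom {U | ∃ φ : L, U = {W : ValuationSubring L | φ ∈ W}}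

/-- The constructible topology on the valuation subrings of a field `L`: the coarsest
topology in which all finite intersections `B(φ₁) ∩ ⋯ ∩ B(φ_k)` are open and closed. -/
def consTop (L : Type*) [Field L] : TopologicalSpace (ValuationSubring L) :=
  generateFrom {U | ∃ T : Finset L, U = {W : ValuationSubring L | ∀ φ ∈ T, φ ∈ W} ∨
    U = {W : ValuationSubring L | ∀ φ ∈ T, φ ∈ W}ᶜ}

/-- The subspace Zariski topology on a set of valuation subrings. -/
def zarSub {L : Type*} [Field L] (S : Set (ValuationSubring L)) : TopologicalSpace ↥S :=
  (zarTop L).induced Subtype.val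

/-- The subspace constructible topology on a set of valuation subrings. -/
def consSub {L : Type*} [Field L] (S : Set (ValuationSubring L)) : TopologicalSpace ↥S :=
  (consTop L).induced Subtype.val

/-- `d` is a metric on `X` inducing the topology `t`. -/
def MetrizedBy {X : Type*} (t : TopologicalSpace X) (d : X → X → ℝ) : Prop :=
  (∀ x y, d x y = d y x) ∧ (∀ x y, d x y = 0 ↔ x = y) ∧
  (∀ x y z, d x z ≤ d x y + d y z) ∧
  t = generateFrom {U : Set X | ∃ (x : X) (ε : ℝ), 0 < ε ∧ U = {y | d x y < ε}}

/-- The topology `t` is metrizable. -/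
def IsMetrizable {X : Type*} (t : TopologicalSpace X) : Prop := ∃ d, MetrizedBy t d

/-- The topology `t` is induced by an ultrametric. -/
def IsUltrametrizable {X : Type*} (t : TopologicalSpace X) : Prop :=
  ∃ d, MetrizedBy t d ∧ ∀ x y z, d x z ≤ max (d x y) (d y z)

/-- `dd` computes the distance `d_δ` on `𝒱(•,δ)`:
`d_δ(V_E, V_F) = lim_n max (d(s_n,t_n) - e^{-δ}) 0`. -/
def IsDistδ (v : AddValuation K (WithTop ℝ)) (δ : WithTop ℝ)
    (dd : ValuationSubring (RatFunc K) → ValuationSubring (RatFunc K) → ℝ) : Prop :=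
  ∀ (W W' : ValuationSubring (RatFunc K)) (s t : ℕ → K),
    IsPC v s → IsBreadth v s δ → (W : Set (RatFunc K)) = VESet v s →
    IsPC v t → IsBreadth v t δ → (W' : Set (RatFunc K)) = VESet v t →
    Tendsto (fun n => max (dK v (s n) (t n) - expNeg δ) 0) atTop (𝓝 (dd W W'))

/-- The `Λ`-upper limit topology on the interval `(-∞, b] ⊆ ℝ ∪ {∞}`, generated by the
half-open intervals `(α, λ]` with `λ ∈ Λ ∪ {∞}`. -/
def upperTopWT (b : WithTop ℝ) (Λ : Set ℝ) : TopologicalSpace {γ : WithTop ℝ // γ ≤ b} :=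
  generateFrom {U | ∃ α lam : WithTop ℝ, α ≤ b ∧
    (lam = ⊤ ∨ ∃ r ∈ Λ, lam = (r : WithTop ℝ)) ∧
    U = {γ : {γ : WithTop ℝ // γ ≤ b} | α < (γ : WithTop ℝ) ∧ (γ : WithTop ℝ) ≤ lam}}

/-- The `Λ`-upper limit topology on `(-∞, +∞] = ℝ ∪ {∞}`. -/
def upperTopAll (Λ : Set ℝ) : TopologicalSpace (WithTop ℝ) :=
  generateFrom {U | ∃ α lam : WithTop ℝ,
    (lam = ⊤ ∨ ∃ r ∈ Λ, lam = (r : WithTop ℝ)) ∧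
    U = {γ : WithTop ℝ | α < γ ∧ γ ≤ lam}}

/-- The `Λ`-upper limit topology on an interval `(a, b]` of `ℝ ∪ {±∞}`. -/
def upperTopE (a b : EReal) (Λ : Set ℝ) : TopologicalSpace {x : EReal // a < x ∧ x ≤ b} :=
  generateFrom {U | ∃ α lam : EReal, (a < α ∧ α ≤ b) ∧
    (lam = ⊤ ∨ ∃ r ∈ Λ, lam = (r : EReal)) ∧
    U = {x : {x : EReal // a < x ∧ x ≤ b} | α < (x : EReal) ∧ (x : EReal) ≤ lam}}


/-- `𝒲`: the valuation domains of the valuations `w_E : φ ↦ lim_n v(φ(s_n))`, as `E`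
ranges over the pseudo-convergent sequences for which `w_E` is a valuation. -/
def WW (v : AddValuation K (WithTop ℝ)) : Set (ValuationSubring (RatFunc K)) :=
  {W | ∃ (s : ℕ → K) (w : AddValuation (RatFunc K) (WithTop ℝ)), IsPC v s ∧
    (∀ φ : RatFunc K, OrdLim (fun n => v (RatFunc.eval (RingHom.id K) (s n) φ)) (w φ)) ∧
    (W : Set (RatFunc K)) = {φ : RatFunc K | 0 ≤ w φ}}

/-!
Extend `v` to a valuation `w` of the algebraic closure and factor the numerator and denominator
of `φ ∈ K(X)` into linear factors `X - β`. Along a pseudo-convergent sequence `S`, each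
`w (S n - β)` either equals `w (S (n+1) - S n)` for all `n` or is eventually a constant that is
larger than some `w (S (N+1) - S N)`. If `T` comes eventually closer to `S` than every
`w (S (N+1) - S N)`, and vice versa, then `S` and `T` fall into the same case for every `β`, with
the same constant. So `w (φ (S n)) = c * w (S (n+1) - S n) ^ k` and
`w (φ (T n)) = c * w (T (n+1) - T n) ^ k` with the same `c` and `k`. The two sequences of gaps are
mutually cofinal, so `φ (S n) ∈ V` eventually iff `φ (T n) ∈ V` eventually. Hence
`d_δ(V_E, V_F) = 0` forces `V_E = V_F`. Symmetry and the strong triangle inequality pass to the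
limit from `d`.
-/

section Cofinal

variable {α : Type*} [Preorder α] {P : α → Prop} {D : Set α} {g h : ℕ → α}

lemma eventually_of_eventually_of_cofinal (hP : MonotoneOn P D ∨ AntitoneOn P D)
    (hg : ∀ n, g n ∈ D) (hh : ∀ n, h n ∈ D)
    (hgh : ∀ N, ∀ᶠ n in atTop, g n ≤ h N) (hhg : ∀ N, ∀ᶠ n in atTop, h n ≤ g N)
    (hPg : ∀ᶠ n in atTop, P (g n)) : ∀ᶠ n in atTop, P (h n) := by
  obtain ⟨N, hN⟩ := eventually_atTop.mp hPg
  rcases hP with hmono | hanti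
  · refine Eventually.of_forall fun m => ?_
    obtain ⟨n, hnm, hnN⟩ := ((hgh m).and (eventually_ge_atTop N)).exists
    exact hmono (hg n) (hh m) hnm (hN n hnN)
  · filter_upwards [hhg N] with n hnN
    exact hanti (hh n) (hg N) hnN (hN N le_rfl)

lemma eventually_iff_of_cofinal (hP : MonotoneOn P D ∨ AntitoneOn P D)
    (hg : ∀ n, g n ∈ D) (hh : ∀ n, h n ∈ D)
    (hgh : ∀ N, ∀ᶠ n in atTop, g n ≤ h N) (hhg : ∀ N, ∀ᶠ n in atTop, h n ≤ g N) :
    (∀ᶠ n in atTop, P (g n)) ↔ ∀ᶠ n in atTop, P (h n) :=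
  ⟨eventually_of_eventually_of_cofinal hP hg hh hgh hhg,
    eventually_of_eventually_of_cofinal hP hh hg hhg hgh⟩

end Cofinal

lemma pow_mul_le_pow_mul_iff {Γ₀ : Type*} [LinearOrderedCommGroupWithZero Γ₀] {x : Γ₀}
    (hx : x ≠ 0) (k : ℕ) (d₁ d₂ : Γ₀) : x ^ k * d₁ ≤ x ^ k * d₂ ↔ d₁ ≤ d₂ :=
  mul_le_mul_iff_right₀ (pow_pos (zero_lt_iff.mpr hx) k)

lemma monotoneOn_or_antitoneOn_mul_pow_le_mul_pow {Γ₀ : Type*} [LinearOrderedCommGroupWithZero Γ₀]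
    (c₁ c₂ : Γ₀) (a b : ℕ) :
    MonotoneOn (fun x : Γ₀ => c₁ * x ^ a ≤ c₂ * x ^ b) {x | x ≠ 0} ∨
      AntitoneOn (fun x : Γ₀ => c₁ * x ^ a ≤ c₂ * x ^ b) {x | x ≠ 0} := by
  rcases le_total a b with hab | hab
  · obtain ⟨m, rfl⟩ := Nat.exists_eq_add_of_le hab
    left
    intro x hx y hy hxy hPx
    have reduce : ∀ {z : Γ₀}, z ≠ 0 → (c₁ * z ^ a ≤ c₂ * z ^ (a + m) ↔ c₁ ≤ c₂ * z ^ m) :=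
      fun hz => by
        rw [mul_comm c₁, pow_add, mul_left_comm, pow_mul_le_pow_mul_iff hz]
    rw [reduce hx] at hPx
    exact (reduce hy).mpr (hPx.trans (mul_le_mul_right (pow_le_pow_left₀ zero_le hxy m) c₂))
  · obtain ⟨m, rfl⟩ := Nat.exists_eq_add_of_le hab
    right
    intro x hx y hy hxy hPy
    have reduce : ∀ {z : Γ₀}, z ≠ 0 → (c₁ * z ^ (b + m) ≤ c₂ * z ^ b ↔ c₁ * z ^ m ≤ c₂) :=
      fun hz => by
        rw [mul_comm c₂, pow_add, mul_left_comm, pow_mul_le_pow_mul_iff hz]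
    rw [reduce hy] at hPy
    exact (reduce hx).mpr ((mul_le_mul_right (pow_le_pow_left₀ zero_le hxy m) c₁).trans hPy)

section ValuedField

variable {L Γ₀ : Type*} [Field L] [LinearOrderedCommGroupWithZero Γ₀] (w : Valuation L Γ₀)
  {S T : ℕ → L}

lemma valuation_sub_eq_or_eventually_const (hS : StrictAnti fun n => w (S (n + 1) - S n))
    (β : L) :
    (∀ n, w (S n - β) = w (S (n + 1) - S n)) ∨
      ∃ N, w (S (N + 1) - S N) < w (S N - β) ∧ ∀ n ≥ N, w (S n - β) = w (S N - β) := by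
  by_cases hlim : ∀ n, w (S (n + 1) - β) < w (S n - β)
  · left
    intro n
    rw [show S (n + 1) - S n = (S (n + 1) - β) - (S n - β) by ring,
      w.map_sub_eq_of_lt_right (hlim n)]
  · right
    push Not at hlim
    obtain ⟨n₀, hn₀⟩ := hlim
    have hle : w (S (n₀ + 1) - S n₀) ≤ w (S (n₀ + 1) - β) := by
      calc w (S (n₀ + 1) - S n₀) = w ((S (n₀ + 1) - β) - (S n₀ - β)) := by ring_nf
        _ ≤ max (w (S (n₀ + 1) - β)) (w (S n₀ - β)) := w.map_sub _ _
        _ = w (S (n₀ + 1) - β) := max_eq_left hn₀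
    have hlt : w (S (n₀ + 1 + 1) - S (n₀ + 1)) < w (S (n₀ + 1) - β) :=
      (hS (Nat.lt_succ_self n₀)).trans_le hle
    refine ⟨n₀ + 1, hlt, fun n hn => ?_⟩
    induction n, hn using Nat.le_induction with
    | base => rfl
    | succ n hn ih =>
      have hstep : w (S (n + 1) - S n) < w (S n - β) :=
        ih ▸ (hS.antitone hn).trans_lt hlt
      rw [show S (n + 1) - β = (S (n + 1) - S n) + (S n - β) by ring,
        w.map_add_eq_of_lt_right hstep, ih]

lemma eventually_valuation_sub_eq_of_eventually_const
    (hST : ∀ N, ∀ᶠ n in atTop, w (T n - S n) < w (S (N + 1) - S N)) {β : L} {N : ℕ}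
    (hN : w (S (N + 1) - S N) < w (S N - β)) (hconst : ∀ n ≥ N, w (S n - β) = w (S N - β)) :
    ∀ᶠ n in atTop, w (T n - β) = w (S N - β) := by
  filter_upwards [hST N, eventually_ge_atTop N] with n hn hnN
  rw [show T n - β = (T n - S n) + (S n - β) by ring,
    w.map_add_eq_of_lt_right ((hconst n hnN).symm ▸ hn.trans hN), hconst n hnN]

lemma eventually_valuation_sub_succ_lt (hS : StrictAnti fun n => w (S (n + 1) - S n))
    (hST : ∀ N, ∀ᶠ n in atTop, w (T n - S n) < w (S (N + 1) - S N)) (N : ℕ) :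
    ∀ᶠ n in atTop, w (T (n + 1) - T n) < w (S (N + 1) - S N) := by
  filter_upwards [(tendsto_add_atTop_nat 1).eventually (hST N), hST N, eventually_gt_atTop N]
    with n hn₁ hn hNn
  rw [show T (n + 1) - T n = (T (n + 1) - S (n + 1)) + (S (n + 1) - S n) - (T n - S n) by ring]
  exact w.map_sub_lt (w.map_add_lt hn₁ (hS hNn)) hn

variable (hS : StrictAnti fun n => w (S (n + 1) - S n))
  (hT : StrictAnti fun n => w (T (n + 1) - T n))
  (hST : ∀ N, ∀ᶠ n in atTop, w (T n - S n) < w (S (N + 1) - S N))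
  (hTS : ∀ N, ∀ᶠ n in atTop, w (S n - T n) < w (T (N + 1) - T N))
include hS hT hST hTS

lemma valuation_sub_eq_or_eventually_eq_of_close (β : L) :
    (∀ n, w (S n - β) = w (S (n + 1) - S n) ∧ w (T n - β) = w (T (n + 1) - T n)) ∨
      ∃ c ≠ 0, ∀ᶠ n in atTop, w (S n - β) = c ∧ w (T n - β) = c := by
  rcases valuation_sub_eq_or_eventually_const w hS β with hSlim | ⟨N, hN, hconst⟩
  · rcases valuation_sub_eq_or_eventually_const w hT β with hTlim | ⟨M, hM, hTconst⟩
    · exact Or.inl fun n => ⟨hSlim n, hTlim n⟩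
    · obtain ⟨n, hn⟩ :=
        (eventually_valuation_sub_eq_of_eventually_const w hTS hM hTconst).exists_forall_of_atTop
      refine absurd ?_ (hS n.lt_succ_self).ne
      show w (S (n + 1 + 1) - S (n + 1)) = w (S (n + 1) - S n)
      rw [← hSlim, ← hSlim, hn n le_rfl, hn (n + 1) n.le_succ]
  · exact Or.inr ⟨w (S N - β), (zero_le.trans_lt hN).ne',
      ((eventually_ge_atTop N).and
        (eventually_valuation_sub_eq_of_eventually_const w hST hN hconst)).mono
        fun n hn => ⟨hconst n hn.1, hn.2⟩⟩

lemma exists_prod_valuation_sub_eq (M : Multiset L) :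
    ∃ c ≠ 0, ∃ k : ℕ, ∀ᶠ n in atTop,
      (M.map fun β => w (S n - β)).prod = c * w (S (n + 1) - S n) ^ k ∧
      (M.map fun β => w (T n - β)).prod = c * w (T (n + 1) - T n) ^ k := by
  induction M using Multiset.induction_on with
  | empty => exact ⟨1, one_ne_zero, 0, Eventually.of_forall fun n => by simp⟩
  | cons β M ih =>
    obtain ⟨c, hc, k, hk⟩ := ih
    rcases valuation_sub_eq_or_eventually_eq_of_close w hS hT hST hTS β with hlim | ⟨c', hc', hconst⟩
    · refine ⟨c, hc, k + 1, hk.mono fun n hn => ?_⟩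
      simp only [Multiset.map_cons, Multiset.prod_cons, hn, (hlim n).1, (hlim n).2]
      constructor <;> rw [pow_succ', mul_left_comm]
    · refine ⟨c' * c, mul_ne_zero hc' hc, k, (hk.and hconst).mono fun n hn => ?_⟩
      simp only [Multiset.map_cons, Multiset.prod_cons, hn.1.1, hn.1.2, hn.2.1, hn.2.2, mul_assoc,
        and_self]

lemma exists_valuation_eval_eq {f : L[X]} (hf : f ≠ 0) (hsplit : f.Splits) :
    ∃ c ≠ 0, ∃ k : ℕ, ∀ᶠ n in atTop,
      w (f.eval (S n)) = c * w (S (n + 1) - S n) ^ k ∧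
      w (f.eval (T n)) = c * w (T (n + 1) - T n) ^ k := by
  obtain ⟨c, hc, k, hk⟩ := exists_prod_valuation_sub_eq w hS hT hST hTS f.roots
  refine ⟨w f.leadingCoeff * c, mul_ne_zero (w.ne_zero_iff.mpr (leadingCoeff_ne_zero.mpr hf)) hc,
    k, hk.mono fun n hn => ?_⟩
  simp only [hsplit.eval_eq_prod_roots, map_mul, map_multiset_prod, Multiset.map_map,
    Function.comp_def, hn.1, hn.2, mul_assoc, and_self]

lemma eventually_valuation_div_le_one_iff (p : L[X]) {q : L[X]} (hq : q ≠ 0) (hps : p.Splits)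
    (hqs : q.Splits) :
    (∀ᶠ n in atTop, w (p.eval (S n) / q.eval (S n)) ≤ 1) ↔
      ∀ᶠ n in atTop, w (p.eval (T n) / q.eval (T n)) ≤ 1 := by
  rcases eq_or_ne p 0 with rfl | hp
  · simp
  obtain ⟨c₁, -, a, ha⟩ := exists_valuation_eval_eq w hS hT hST hTS hp hps
  obtain ⟨c₂, hc₂, b, hb⟩ := exists_valuation_eval_eq w hS hT hST hTS hq hqs
  have hne : ∀ {U : ℕ → L}, (StrictAnti fun n => w (U (n + 1) - U n)) →
      ∀ n, w (U (n + 1) - U n) ≠ 0 :=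
    fun hU n => (zero_le.trans_lt (hU n.lt_succ_self)).ne'
  have reduce : ∀ {U : ℕ → L}, (StrictAnti fun n => w (U (n + 1) - U n)) →
      (∀ᶠ n in atTop, w (p.eval (U n)) = c₁ * w (U (n + 1) - U n) ^ a ∧
        w (q.eval (U n)) = c₂ * w (U (n + 1) - U n) ^ b) →
      ((∀ᶠ n in atTop, w (p.eval (U n) / q.eval (U n)) ≤ 1) ↔
        ∀ᶠ n in atTop, c₁ * w (U (n + 1) - U n) ^ a ≤ c₂ * w (U (n + 1) - U n) ^ b) :=
    fun hU hUpq => eventually_congr <| hUpq.mono fun n hn => by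
      rw [map_div₀, hn.1, hn.2,
        div_le_one₀ (zero_lt_iff.mpr (mul_ne_zero hc₂ (pow_ne_zero _ (hne hU n))))]
  rw [reduce hS ((ha.and hb).mono fun n hn => ⟨hn.1.1, hn.2.1⟩),
    reduce hT ((ha.and hb).mono fun n hn => ⟨hn.1.2, hn.2.2⟩)]
  exact eventually_iff_of_cofinal (monotoneOn_or_antitoneOn_mul_pow_le_mul_pow c₁ c₂ a b)
    (hne hS) (hne hT) (fun N => (eventually_valuation_sub_succ_lt w hT hTS N).mono fun _ h => h.le)
    (fun N => (eventually_valuation_sub_succ_lt w hS hST N).mono fun _ h => h.le)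

end ValuedField

theorem exists_valuationSubring_comap_eq {L : Type*} [Field L] (A : ValuationSubring K)
    (f : K →+* L) : ∃ B : ValuationSubring L, B.comap f = A := by
  obtain ⟨B, hAB, hloc⟩ := IsLocalRing.exists_factor_valuationRing (f.comp A.subtype)
  refine ⟨B, le_antisymm (fun x hx => ?_) fun x hx => hAB ⟨x, hx⟩⟩
  by_contra hxA
  have hx0 : x ≠ 0 := by rintro rfl; exact hxA A.zero_mem
  have hinv : x⁻¹ ∈ A := (A.mem_or_inv_mem x).resolve_left hxA
  have hunit : IsUnit (⟨x⁻¹, hinv⟩ : A) := hloc.map_nonunit _ <|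
    isUnit_iff_exists_inv.mpr ⟨⟨f x, hx⟩, Subtype.ext (by simp [hx0])⟩
  obtain ⟨y, hy⟩ := isUnit_iff_exists_inv.mp hunit
  have hyx : (y : K) = x := by simpa [Subtype.ext_iff, inv_mul_eq_iff_eq_mul₀ hx0] using hy
  exact hxA (hyx ▸ y.2)

lemma exists_valuationSubring_algebraMap_mem_iff (v : AddValuation K (WithTop ℝ))
    (L : Type*) [Field L] [Algebra K L] :
    ∃ B : ValuationSubring L, ∀ a : K, algebraMap K L a ∈ B ↔ 0 ≤ v a :=
  let ⟨B, hB⟩ := exists_valuationSubring_comap_eq v.valuationSubring (algebraMap K L)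
  ⟨B, fun a => SetLike.ext_iff.mp hB a⟩

lemma valuation_sub_lt_of_isBreadth {v : AddValuation K (WithTop ℝ)} {s : ℕ → K}
    {δ : WithTop ℝ} (hs : IsPC v s) (hδ : IsBreadth v s δ) (n : ℕ) :
    v (s (n + 1) - s n) < δ := by
  by_contra! hle
  obtain ⟨m, hm, hnm⟩ := ((hδ.2 _ (hle.trans_lt (hs n))).and (eventually_ge_atTop (n + 1))).exists
  exact hm.not_ge ((strictMono_nat_of_lt_succ hs).monotone hnm)

section Extension

variable {v : AddValuation K (WithTop ℝ)} {L : Type*} [Field L] [Algebra K L]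
  {B : ValuationSubring L} (hB : ∀ a : K, algebraMap K L a ∈ B ↔ 0 ≤ v a)
include hB

lemma valuation_algebraMap_lt_of_lt {a b : K} (h : v a < v b) :
    B.valuation (algebraMap K L b) < B.valuation (algebraMap K L a) := by
  have ha : a ≠ 0 := by rintro rfl; simp at h
  rcases eq_or_ne b 0 with rfl | hb
  · simpa [zero_lt_iff] using ha
  refine lt_of_not_ge fun hle => h.not_ge ?_
  have hab : 0 ≤ v (a / b) := by
    rw [← hB, ← B.valuation_le_one_iff, map_div₀, map_div₀]
    exact div_le_one_of_le₀ hle zero_le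
  calc v b ≤ v (a / b) + v b := le_add_of_nonneg_left hab
    _ = v a := by rw [← v.map_mul, div_mul_cancel₀ a hb]

lemma strictAnti_valuation_algebraMap_sub {s : ℕ → K} (hs : IsPC v s) :
    StrictAnti fun n => B.valuation (algebraMap K L (s (n + 1)) - algebraMap K L (s n)) :=
  strictAnti_nat_of_succ_lt fun n => by
    simpa only [← map_sub] using valuation_algebraMap_lt_of_lt hB (hs n)

lemma eventually_valuation_algebraMap_sub_lt {s t : ℕ → K} {δ : WithTop ℝ} (hs : IsPC v s)
    (hδs : IsBreadth v s δ)
    (H : ∀ γ : ℝ, (γ : WithTop ℝ) < δ → ∀ᶠ n in atTop, (γ : WithTop ℝ) < v (t n - s n))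
    (N : ℕ) :
    ∀ᶠ n in atTop, B.valuation (algebraMap K L (t n) - algebraMap K L (s n)) <
      B.valuation (algebraMap K L (s (N + 1)) - algebraMap K L (s N)) := by
  have hlt := valuation_sub_lt_of_isBreadth hs hδs N
  obtain ⟨γ, hγ⟩ := WithTop.ne_top_iff_exists.mp (hlt.trans_le le_top).ne
  rw [← hγ] at hlt
  filter_upwards [H γ hlt] with n hn
  rw [hγ] at hn
  simpa only [← map_sub] using valuation_algebraMap_lt_of_lt hB hn

lemma zero_le_valuation_eval_iff (φ : RatFunc K) (x : K) :
    0 ≤ v (RatFunc.eval (RingHom.id K) x φ) ↔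
      B.valuation ((φ.num.map (algebraMap K L)).eval (algebraMap K L x) /
        (φ.denom.map (algebraMap K L)).eval (algebraMap K L x)) ≤ 1 := by
  rw [← hB, ← B.valuation_le_one_iff, eval_map_algebraMap, eval_map_algebraMap,
    aeval_algebraMap_apply, aeval_algebraMap_apply, ← map_div₀]
  -- `RatFunc.eval` is `num / denom` by definition
  rfl

end Extension

theorem VESet_eq_of_eventually_lt {v : AddValuation K (WithTop ℝ)} {s t : ℕ → K}
    {δ : WithTop ℝ} (hs : IsPC v s) (ht : IsPC v t) (hδs : IsBreadth v s δ)
    (hδt : IsBreadth v t δ)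
    (H : ∀ γ : ℝ, (γ : WithTop ℝ) < δ → ∀ᶠ n in atTop, (γ : WithTop ℝ) < v (s n - t n)) :
    VESet v s = VESet v t := by
  obtain ⟨B, hB⟩ := exists_valuationSubring_algebraMap_mem_iff v (AlgebraicClosure K)
  have H' : ∀ γ : ℝ, (γ : WithTop ℝ) < δ → ∀ᶠ n in atTop, (γ : WithTop ℝ) < v (t n - s n) :=
    fun γ hγ => (H γ hγ).mono fun n hn => by rwa [v.map_sub_swap]
  ext φ
  simp only [VESet, Set.mem_ofPred_eq, zero_le_valuation_eval_iff hB]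
  exact eventually_valuation_div_le_one_iff B.valuation
    (strictAnti_valuation_algebraMap_sub hB hs) (strictAnti_valuation_algebraMap_sub hB ht)
    (eventually_valuation_algebraMap_sub_lt hB hs hδs H')
    (eventually_valuation_algebraMap_sub_lt hB ht hδt H) _
    (map_ne_zero (RatFunc.denom_ne_zero φ)) (IsAlgClosed.splits _) (IsAlgClosed.splits _)

lemma expNeg_nonneg (γ : WithTop ℝ) : 0 ≤ expNeg γ := by
  induction γ with
  | top => exact le_rfl
  | coe r => exact (Real.exp_pos _).le

lemma expNeg_antitone : Antitone expNeg := by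
  intro a b hab
  induction b with
  | top => exact expNeg_nonneg a
  | coe r =>
    induction a with
    | top => exact absurd hab (by simp)
    | coe q => exact Real.exp_le_exp.mpr (neg_le_neg (WithTop.coe_le_coe.mp hab))

lemma expNeg_lt_exp_neg_iff {a : WithTop ℝ} {γ : ℝ} :
    expNeg a < Real.exp (-γ) ↔ (γ : WithTop ℝ) < a := by
  induction a with
  | top => exact iff_of_true (Real.exp_pos _) (WithTop.coe_lt_top γ)
  | coe r =>
    change Real.exp (-r) < Real.exp (-γ) ↔ _
    rw [Real.exp_lt_exp, neg_lt_neg_iff, WithTop.coe_lt_coe]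

section Distance

variable (v : AddValuation K (WithTop ℝ))

lemma dK_self (x : K) : dK v x x = 0 := by
  rw [dK, sub_self, v.map_zero]
  rfl

lemma dK_comm (x y : K) : dK v x y = dK v y x := by
  rw [dK, dK, v.map_sub_swap]

lemma dK_le_max (x y z : K) : dK v x z ≤ max (dK v x y) (dK v y z) := by
  rw [dK, dK, dK, ← expNeg_antitone.map_min]
  exact expNeg_antitone ((v.map_add _ _).trans_eq (by rw [sub_add_sub_cancel]))

variable {v}

lemma eventually_lt_valuation_sub_of_tendsto {s t : ℕ → K} {δ : WithTop ℝ}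
    (h : Tendsto (fun n => max (dK v (s n) (t n) - expNeg δ) 0) atTop (𝓝 0)) (γ : ℝ)
    (hγ : (γ : WithTop ℝ) < δ) : ∀ᶠ n in atTop, (γ : WithTop ℝ) < v (s n - t n) := by
  have hε : 0 < Real.exp (-γ) - expNeg δ := sub_pos.mpr (expNeg_lt_exp_neg_iff.mpr hγ)
  filter_upwards [h.eventually_lt_const hε] with n hn
  have hd := (le_max_left _ _).trans_lt hn
  rw [dK] at hd
  exact expNeg_lt_exp_neg_iff.mp (by linarith)

end Distance

theorem statement1_general (v : AddValuation K (WithTop ℝ))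
    (δ : WithTop ℝ)
    (dd : ValuationSubring (RatFunc K) → ValuationSubring (RatFunc K) → ℝ)
    (hdd : IsDistδ v δ dd) :
    (∀ W ∈ VVδ v δ, ∀ W' ∈ VVδ v δ, dd W W' = dd W' W) ∧
    (∀ W ∈ VVδ v δ, ∀ W' ∈ VVδ v δ, (dd W W' = 0 ↔ W = W')) ∧
    (∀ W ∈ VVδ v δ, ∀ W' ∈ VVδ v δ, ∀ W'' ∈ VVδ v δ,
      dd W W' ≤ max (dd W W'') (dd W'' W')) := by
  refine ⟨?_, ?_, ?_⟩
  · rintro W ⟨s, hs, hδs, hW⟩ W' ⟨t, ht, hδt, hW'⟩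
    refine tendsto_nhds_unique (hdd W W' s t hs hδs hW ht hδt hW') ?_
    simpa only [dK_comm] using hdd W' W t s ht hδt hW' hs hδs hW
  · rintro W ⟨s, hs, hδs, hW⟩ W' ⟨t, ht, hδt, hW'⟩
    refine ⟨fun h0 => SetLike.coe_injective ?_, ?_⟩
    · have hlim := hdd W W' s t hs hδs hW ht hδt hW'
      rw [h0] at hlim
      rw [hW, hW', VESet_eq_of_eventually_lt hs ht hδs hδt
        (eventually_lt_valuation_sub_of_tendsto hlim)]
    · rintro rfl
      refine tendsto_nhds_unique (hdd W W s s hs hδs hW hs hδs hW) ?_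
      simp only [dK_self, zero_sub, max_eq_right (neg_nonpos.mpr (expNeg_nonneg δ))]
      exact tendsto_const_nhds
  · rintro W ⟨s, hs, hδs, hW⟩ W' ⟨t, ht, hδt, hW'⟩ W'' ⟨r, hr, hδr, hW''⟩
    have hmono : Monotone fun x : ℝ => max (x - expNeg δ) 0 :=
      fun x y hxy => max_le_max (sub_le_sub_right hxy _) le_rfl
    refine le_of_tendsto_of_tendsto' (hdd W W' s t hs hδs hW ht hδt hW')
      ((hdd W W'' s r hs hδs hW hr hδr hW'').max (hdd W'' W' r t hr hδr hW'' ht hδt hW'))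
      fun n => ?_
    exact (hmono (dK_le_max v (s n) (r n) (t n))).trans_eq hmono.map_max

/-- `d_δ` is an ultrametric distance on `𝒱(•,δ)`: it is symmetric,
vanishes exactly on the diagonal, and satisfies the strong triangle inequality. -/
theorem statement1 (v : AddValuation K (WithTop ℝ)) (hv : IsRankOne v)
    (δ : WithTop ℝ)
    (dd : ValuationSubring (RatFunc K) → ValuationSubring (RatFunc K) → ℝ)
    (hdd : IsDistδ v δ dd) :
    (∀ W ∈ VVδ v δ, ∀ W' ∈ VVδ v δ, dd W W' = dd W' W) ∧
    (∀ W ∈ VVδ v δ, ∀ W' ∈ VVδ v δ, (dd W W' = 0 ↔ W = W')) ∧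
    (∀ W ∈ VVδ v δ, ∀ W' ∈ VVδ v δ, ∀ W'' ∈ VVδ v δ,
      dd W W' ≤ max (dd W W'') (dd W'' W')) :=
  statement1_general v δ dd hdd

end PaperPCZar
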